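/- For the copulas C_n(u,v) = uv + (1−cos(2πu))(1−cos(2πnv))/(8π²n) and Π(u,v) = uv, the L¹ distance of their densities satisfies ∫∫_{[0,1]²} |c_n(u,v) − 1| du dv = 2/π² for every n ≥ 1, where c_n(u,v) = 1 + (1/2)sin(2πu)sin(2πnv). In particular this distance does not tend to 0. -/

import Mathlib

open Set

/-- The copula C_n(u,v) = uv + (1−cos(2πu))(1−cos(2πnv))/(8π²n). -/
noncomputable def Cn (n : ℕ) (u v : ℝ) : ℝ :=
  u * v + (1 - Real.cos (2 * Real.pi * u)) * (1 - Real.cos (2 * Real.pi * n * v))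
    / (8 * Real.pi ^ 2 * n)

/-- The density c_n(u,v) = 1 + (1/2)sin(2πu)sin(2πnv). -/
noncomputable def cn (n : ℕ) (u v : ℝ) : ℝ :=
  1 + (1/2) * Real.sin (2 * Real.pi * u) * Real.sin (2 * Real.pi * n * v)

/-! The perturbation `c_n - 1` factors as `½ sin(2πu) sin(2πnv)`, so its L¹ norm is
`½ (∫₀¹ |sin 2πu| du)(∫₀¹ |sin 2πnv| dv)`. Both factors equal `∫₀¹ |sin πx| dx = 2/π`,
because `x ↦ |sin πx|` is `1`-periodic and the average of a periodic function over a period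
is unchanged by the substitution `x ↦ m x`. Hence the distance is `½ (2/π)² = 2/π²` for
every `n ≥ 1`, a positive constant. -/

open Real intervalIntegral

theorem Function.Periodic.intervalIntegral_comp_nat_mul {E : Type*} [NormedAddCommGroup E]
    [NormedSpace ℝ E] {f : ℝ → E} {T : ℝ} (hf : Function.Periodic f T)
    (h_int : ∀ t₁ t₂, IntervalIntegrable f MeasureTheory.volume t₁ t₂) {m : ℕ} (hm : m ≠ 0) :
    ∫ x in 0..T, f (m * x) = ∫ x in 0..T, f x := by
  have hm' : (m : ℝ) ≠ 0 := Nat.cast_ne_zero.mpr hm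
  have h_periods : ∫ x in 0..m * T, f x = (m : ℝ) • ∫ x in 0..T, f x := by
    rw [Nat.cast_smul_eq_nsmul]
    simpa using hf.intervalIntegral_add_zsmul_eq (m : ℤ) 0 h_int
  rw [integral_comp_mul_left _ hm', mul_zero, h_periods, smul_smul, inv_mul_cancel₀ hm',
    one_smul]

theorem periodic_abs_sin_pi_mul : Function.Periodic (fun x : ℝ => |sin (π * x)|) 1 := by
  intro x
  simp only [mul_add, mul_one, sin_add_pi, abs_neg]

theorem integral_abs_sin_pi_mul : ∫ x in (0:ℝ)..1, |sin (π * x)| = 2 / π := by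
  have h_nonneg : ∀ x ∈ uIcc (0:ℝ) 1, |sin (π * x)| = sin (π * x) := by
    intro x hx
    rw [uIcc_of_le zero_le_one] at hx
    exact abs_of_nonneg (sin_nonneg_of_nonneg_of_le_pi (by nlinarith [pi_pos, hx.1])
      (by nlinarith [pi_pos, hx.2]))
  rw [integral_congr h_nonneg, integral_comp_mul_left _ pi_ne_zero, integral_sin, mul_zero,
    mul_one, cos_zero, cos_pi, smul_eq_mul]
  field_simp
  norm_num

theorem integral_abs_sin_pi_mul_nat_mul {m : ℕ} (hm : m ≠ 0) :
    ∫ x in (0:ℝ)..1, |sin (π * (m * x))| = 2 / π := by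
  rw [periodic_abs_sin_pi_mul.intervalIntegral_comp_nat_mul
    (fun _ _ => (by fun_prop : Continuous fun x => |sin (π * x)|).intervalIntegrable _ _) hm,
    integral_abs_sin_pi_mul]

theorem integral_abs_sin_two_pi_nat_mul {n : ℕ} (hn : n ≠ 0) :
    ∫ x in (0:ℝ)..1, |sin (2 * π * n * x)| = 2 / π := by
  have h := integral_abs_sin_pi_mul_nat_mul (m := 2 * n) (by positivity)
  push_cast at h
  convert h using 5
  ring

theorem abs_cn_sub_one (n : ℕ) (u v : ℝ) :
    |cn n u v - 1| = 1 / 2 * |sin (2 * π * u)| * |sin (2 * π * n * v)| := by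
  rw [cn, add_sub_cancel_left, abs_mul, abs_mul, abs_of_pos (by norm_num : (0:ℝ) < 1 / 2)]

theorem integral_integral_abs_cn_sub_one {n : ℕ} (hn : n ≠ 0) :
    ∫ u in (0:ℝ)..1, ∫ v in (0:ℝ)..1, |cn n u v - 1| = 2 / π ^ 2 := by
  have h_u := integral_abs_sin_two_pi_nat_mul (n := 1) one_ne_zero
  simp only [Nat.cast_one, mul_one] at h_u
  simp only [abs_cn_sub_one, integral_const_mul, integral_abs_sin_two_pi_nat_mul hn,
    integral_mul_const, h_u]
  field_simp

/-- The L¹ distance between the density of C_n and the density 1 of Π equals 2/π²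
for every n ≥ 1; in particular it does not tend to 0. -/
theorem Cn_density_L1_distance :
    (∀ n : ℕ, 1 ≤ n →
      (∫ u in (0:ℝ)..1, ∫ v in (0:ℝ)..1, |cn n u v - 1|) = 2 / Real.pi ^ 2) ∧
    ¬ Filter.Tendsto (fun n : ℕ => ∫ u in (0:ℝ)..1, ∫ v in (0:ℝ)..1, |cn n u v - 1|)
      Filter.atTop (nhds 0) := by
  have h_dist : ∀ n : ℕ, 1 ≤ n →
      (∫ u in (0:ℝ)..1, ∫ v in (0:ℝ)..1, |cn n u v - 1|) = 2 / π ^ 2 :=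
    fun n hn => integral_integral_abs_cn_sub_one (Nat.one_le_iff_ne_zero.mp hn)
  refine ⟨h_dist, fun h_tendsto => ?_⟩
  have h_const : Filter.Tendsto (fun _ : ℕ => 2 / π ^ 2) Filter.atTop (nhds 0) :=
    h_tendsto.congr' (Filter.eventually_atTop.mpr ⟨1, h_dist⟩)
  exact (by positivity : (2:ℝ) / π ^ 2 ≠ 0) (tendsto_nhds_unique tendsto_const_nhds h_const)
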